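/- Let n ≥ 1, m = n², and consider the universe U = [n] × [n] with B = { {(1,f(1)),...,(n,f(n))} : f : [n] → [n] }, the bases of a partition matroid. Let g(z) = (∑_{(i,j)} z_{i,j})^n. Then inf{ g(z) : z > 0, z^S ≥ 1 for all S ∈ B } ≥ n^{2n}. -/
import Mathlib


open Finset

/-- for the partition matroid on [n]×[n] whose bases pick one
element per row, and g(z) = (∑ z_{i,j})^n, every z > 0 satisfying all
constraints z^S ≥ 1 has g(z) ≥ n^{2n}; hence the infimum is ≥ n^{2n}. -/
theorem stmt_11 (n : ℕ) (hn : 1 ≤ n) (z : Fin n × Fin n → ℝ)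
    (hz : ∀ p, 0 < z p)
    (hcon : ∀ f : Fin n → Fin n, 1 ≤ ∏ i, z (i, f i)) :
    (n : ℝ) ^ (2 * n) ≤ (∑ p, z p) ^ n := by
  have hn0 : (0:ℝ) < n := by exact_mod_cast hn
  set row : Fin n → ℝ := fun i => ∑ j, z (i, j) with hrow
  have hrowpos : ∀ i, 0 < row i := fun i =>
    Finset.sum_pos (fun j _ => hz (i, j)) (univ_nonempty_iff.2 ⟨⟨0, hn⟩⟩)
  have hS : ∑ p, z p = ∑ i, row i := by
    rw [Fintype.sum_prod_type]
  -- product of row sums expands to sum over functions, each term ≥ 1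
  have hprod : (n:ℝ) ^ n ≤ ∏ i, row i := by
    have hexp : ∏ i, row i = ∑ f : Fin n → Fin n, ∏ i, z (i, f i) :=
      Fintype.prod_sum _
    have hcard : (Fintype.card (Fin n → Fin n) : ℝ) ≤
        ∑ f : Fin n → Fin n, ∏ i, z (i, f i) := by
      calc (Fintype.card (Fin n → Fin n) : ℝ)
          = ∑ _f : Fin n → Fin n, (1:ℝ) := by simp
        _ ≤ _ := Finset.sum_le_sum fun f _ => hcon f
    rw [hexp]
    simpa using hcard
  -- AM-GM on the rows with equal weights 1/n
  have hamgm := Real.geom_mean_le_arith_mean_weighted univ (fun _ => (n:ℝ)⁻¹) row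
    (fun i _ => by positivity) (by simp; field_simp) (fun i _ => (hrowpos i).le)
  have hlhs : (∏ i, row i) ^ ((n:ℝ)⁻¹) = ∏ i, row i ^ ((n:ℝ)⁻¹) := by
    rw [← Real.finset_prod_rpow _ _ (fun i _ => (hrowpos i).le)]
  have hsum : (n:ℝ)^2 ≤ ∑ i, row i := by
    have h1 : ((n:ℝ)^n) ^ ((n:ℝ)⁻¹) ≤ (∏ i, row i) ^ ((n:ℝ)⁻¹) :=
      Real.rpow_le_rpow (by positivity) hprod (by positivity)
    have h2 : ((n:ℝ)^n) ^ ((n:ℝ)⁻¹) = (n:ℝ) := by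
      rw [← Real.rpow_natCast (n:ℝ) n, ← Real.rpow_mul hn0.le]
      rw [mul_inv_cancel₀ (ne_of_gt hn0), Real.rpow_one]
    have h3 : ∑ i, (n:ℝ)⁻¹ * row i = (n:ℝ)⁻¹ * ∑ i, row i := by
      rw [Finset.mul_sum]
    have : (n:ℝ) ≤ (n:ℝ)⁻¹ * ∑ i, row i := by
      calc (n:ℝ) = ((n:ℝ)^n) ^ ((n:ℝ)⁻¹) := h2.symm
        _ ≤ (∏ i, row i) ^ ((n:ℝ)⁻¹) := h1
        _ = ∏ i, row i ^ ((n:ℝ)⁻¹) := hlhs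
        _ ≤ ∑ i, (n:ℝ)⁻¹ * row i := hamgm
        _ = _ := h3
    have h4 := mul_le_mul_of_nonneg_left this hn0.le
    rw [← mul_assoc, mul_inv_cancel₀ hn0.ne', one_mul] at h4
    nlinarith [h4]
  rw [hS]
  calc (n:ℝ) ^ (2 * n) = ((n:ℝ)^2) ^ n := by rw [pow_mul]
    _ ≤ (∑ i, row i) ^ n := pow_le_pow_left₀ (by positivity) hsum n
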